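/- Let N ≥ 3, let μ ≡ 0, and let λ > 0. If either (a) 0 < k ≤ 1 and p > 0, or (b) 1 < k < N-1 and 0 < p < (N-1)/(k-1), then the problem (1.1) has no positive solution. -/

import Mathlib

open MeasureTheory ENNReal Filter

noncomputable section

/-- The point `(y', t) ∈ ℝ^N` for `y' ∈ ℝ^{N-1}`, `t ∈ ℝ`. -/
def up (N : ℕ) (y' : EuclideanSpace ℝ (Fin (N - 1))) (t : ℝ) : EuclideanSpace ℝ (Fin N) :=
  (WithLp.equiv 2 (Fin N → ℝ)).symm fun i => if h : (i : ℕ) < N - 1 then y' ⟨i, h⟩ else t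

/-- The last coordinate `x_N` of `x ∈ ℝ^N`. -/
def ht (N : ℕ) (x : EuclideanSpace ℝ (Fin N)) : ℝ :=
  if h : N - 1 < N then x ⟨N - 1, h⟩ else 0

/-- Reflection `x̄ = (x', -x_N)` of `x = (x', x_N)` in the hyperplane `x_N = 0`. -/
def reflN (N : ℕ) (x : EuclideanSpace ℝ (Fin N)) : EuclideanSpace ℝ (Fin N) :=
  (WithLp.equiv 2 (Fin N → ℝ)).symm fun i => if (i : ℕ) < N - 1 then x i else -x i

/-- Surface area `σ_N` of the unit sphere in `ℝ^N` (equal to `N` times the unit ball volume). -/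
def sphereArea (N : ℕ) : ℝ :=
  N * (volume (Metric.ball (0 : EuclideanSpace ℝ (Fin N)) 1)).toReal

/-- The open upper half space `ℝ^N_+ = ℝ^{N-1} × (0,∞)`. -/
def upperHalf (N : ℕ) : Set (EuclideanSpace ℝ (Fin N)) := {x | 0 < ht N x}

/-- `H_u(x') = ∫_{ℝ^{N-1}} u(y',0)^p |x'-y'|^{-k} dy'`. -/
def Hu (N : ℕ) (p k : ℝ) (u : EuclideanSpace ℝ (Fin N) → ℝ)
    (x' : EuclideanSpace ℝ (Fin (N - 1))) : ℝ≥0∞ :=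
  ∫⁻ y', ENNReal.ofReal (u (up N y' 0)) ^ p * ENNReal.ofReal ‖x' - y'‖ ^ (-k)

/-- The Newtonian potential `U^ν(x) = (1/((N-2)σ_N)) ∫ |x-y|^{2-N} dν(y)`. -/
def NewtPot (N : ℕ) (ν : Measure (EuclideanSpace ℝ (Fin N)))
    (x : EuclideanSpace ℝ (Fin N)) : ℝ :=
  (((N : ℝ) - 2) * sphereArea N)⁻¹ * (∫⁻ y, ENNReal.ofReal ‖x - y‖ ^ ((2:ℝ) - N) ∂ν).toReal

/-- The Green potential `∫_{ℝ^N_+} G(x,y) dμ(y)` for the Neumann Green function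
`G(x,y) = (|x-y|^{2-N} + |x̄-y|^{2-N})/((N-2)σ_N)` of the half space. -/
def GreenPot (N : ℕ) (μ : Measure (EuclideanSpace ℝ (Fin N)))
    (x : EuclideanSpace ℝ (Fin N)) : ℝ :=
  (((N : ℝ) - 2) * sphereArea N)⁻¹ *
    (∫⁻ y, (ENNReal.ofReal ‖x - y‖ ^ ((2:ℝ) - N)
          + ENNReal.ofReal ‖reflN N x - y‖ ^ ((2:ℝ) - N)) ∂μ).toReal

/-- `μ` is a nonzero Radon (locally finite Borel) measure whose support is contained in the
open upper half space and whose Newtonian potential is finite everywhere. -/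
def AdmissibleMeasure (N : ℕ) (μ : Measure (EuclideanSpace ℝ (Fin N))) : Prop :=
  μ ≠ 0 ∧ IsLocallyFiniteMeasure μ ∧
    (∃ F : Set (EuclideanSpace ℝ (Fin N)), IsClosed F ∧ F ⊆ upperHalf N ∧ μ Fᶜ = 0) ∧
    (∀ x, (∫⁻ y, ENNReal.ofReal ‖x - y‖ ^ ((2:ℝ) - N) ∂μ) < ⊤)

/-- A measurable function `u` is a positive solution of problem (1.1):
(i) `u > 0` a.e. in `ℝ^N_+`, and for a.e. `x' ∈ ℝ^{N-1}`, `u(z) → u(x',0)` as `z → (x',0)`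
with `z ∈ ℝ^N_+`;
(ii) `H_u < ∞` a.e. in `ℝ^{N-1}`, and `∫_{ℝ^{N-1}} H_u(y')|x-(y',0)|^{2-N} dy' < ∞` for
a.e. `x ∈ ℝ^N_+`;
(iii) `u(x) = ∫_{ℝ^N_+} G(x,y) dμ(y)
　　　　+ (2λ/((N-2)σ_N)) ∫∫ u(z',0)^p |x-(y',0)|^{2-N} |y'-z'|^{-k} dz' dy'`
for a.e. `x ∈ ℝ^N_+`. -/
def IsPosSolution (N : ℕ) (p lam k : ℝ) (μ : Measure (EuclideanSpace ℝ (Fin N)))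
    (u : EuclideanSpace ℝ (Fin N) → ℝ) : Prop :=
  Measurable u ∧
  (∀ᵐ x ∂(volume.restrict (upperHalf N)), 0 < u x) ∧
  (∀ᵐ x' ∂(volume : Measure (EuclideanSpace ℝ (Fin (N - 1)))),
    Tendsto u (nhdsWithin (up N x' 0) (upperHalf N)) (nhds (u (up N x' 0)))) ∧
  (∀ᵐ x' ∂(volume : Measure (EuclideanSpace ℝ (Fin (N - 1)))), Hu N p k u x' < ⊤) ∧
  (∀ᵐ x ∂(volume.restrict (upperHalf N)),
    (∫⁻ y', Hu N p k u y' * ENNReal.ofReal ‖x - up N y' 0‖ ^ ((2:ℝ) - N)) < ⊤) ∧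
  (∀ᵐ x ∂(volume.restrict (upperHalf N)),
    ENNReal.ofReal (u x) =
      ENNReal.ofReal (((N : ℝ) - 2) * sphereArea N)⁻¹ *
        (∫⁻ y, (ENNReal.ofReal ‖x - y‖ ^ ((2:ℝ) - N)
              + ENNReal.ofReal ‖reflN N x - y‖ ^ ((2:ℝ) - N)) ∂μ) +
      ENNReal.ofReal (2 * lam / (((N : ℝ) - 2) * sphereArea N)) *
        ∫⁻ y', ENNReal.ofReal ‖x - up N y' 0‖ ^ ((2:ℝ) - N) * Hu N p k u y')

/-- A measurable function `u` is a positive solution of problem (1.1) with `μ ≡ 0`: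
conditions (i), (ii) as above and
(iii) `u(x) = (2λ/((N-2)σ_N)) ∫∫ u(z',0)^p |x-(y',0)|^{2-N} |y'-z'|^{-k} dz' dy'`
for a.e. `x ∈ ℝ^N_+`. -/
def IsPosSolution0 (N : ℕ) (p lam k : ℝ) (u : EuclideanSpace ℝ (Fin N) → ℝ) : Prop :=
  Measurable u ∧
  (∀ᵐ x ∂(volume.restrict (upperHalf N)), 0 < u x) ∧
  (∀ᵐ x' ∂(volume : Measure (EuclideanSpace ℝ (Fin (N - 1)))),
    Tendsto u (nhdsWithin (up N x' 0) (upperHalf N)) (nhds (u (up N x' 0)))) ∧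
  (∀ᵐ x' ∂(volume : Measure (EuclideanSpace ℝ (Fin (N - 1)))), Hu N p k u x' < ⊤) ∧
  (∀ᵐ x ∂(volume.restrict (upperHalf N)),
    (∫⁻ y', Hu N p k u y' * ENNReal.ofReal ‖x - up N y' 0‖ ^ ((2:ℝ) - N)) < ⊤) ∧
  (∀ᵐ x ∂(volume.restrict (upperHalf N)),
    ENNReal.ofReal (u x) =
      ENNReal.ofReal (2 * lam / (((N : ℝ) - 2) * sphereArea N)) *
        ∫⁻ y', ENNReal.ofReal ‖x - up N y' 0‖ ^ ((2:ℝ) - N) * Hu N p k u y')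

/-- The boundary trace `x' ↦ u(x',0)` belongs to `L^q_loc(ℝ^{N-1})`. -/
def BdryLocLp (N : ℕ) (q : ℝ) (u : EuclideanSpace ℝ (Fin N) → ℝ) : Prop :=
  ∀ K : Set (EuclideanSpace ℝ (Fin (N - 1))), IsCompact K →
    MemLp (fun x' => u (up N x' 0)) (ENNReal.ofReal q) (volume.restrict K)

/-!
If `u` solves the problem, positivity of `u` in the half space forces the boundary trace `u(·,0)`
to be nonzero on a set of positive measure, so `H_u(y') ≳ |y'|^{-k}` as `|y'| → ∞`. A bound
`H_u(y') ≳ |y'|^{-b}` at infinity with `b ≥ 1` improves itself: Fatou's lemma applied to the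
representation formula at boundary points gives `u(x',0) ≳ |x'|^{1-b}`, and inserting this into
the definition of `H_u` gives `H_u(y') ≳ |y'|^{-(p(b-1) + k - (N-1))}`. No such bound can hold
with `b ≤ 1`, because then `∫ H_u(y') |x-(y',0)|^{2-N} dy'` dominates `∫ |y'|^{1-N} dy'` near
infinity, contradicting (ii). For `k ≤ 1` this ends the proof; otherwise the exponents `b - 1`
evolve by `t ↦ p t - (N - k)` starting from `k - 1`, the condition `p < (N-1)/(k-1)` says that
the first step goes down, and then the iterates reach `(-∞, 0]`.
-/

open Topology

theorem ENNReal.rpow_le_rpow_of_nonpos {x y : ℝ≥0∞} {z : ℝ} (hxy : x ≤ y) (hz : z ≤ 0) :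
    y ^ z ≤ x ^ z := by
  have h := ENNReal.inv_le_inv.2 (ENNReal.rpow_le_rpow hxy (neg_nonneg.2 hz))
  rwa [← ENNReal.rpow_neg, ← ENNReal.rpow_neg, neg_neg] at h

theorem ENNReal.ofReal_rpow_le_ofReal_rpow_of_nonpos {x y z : ℝ} (hx : 0 < x) (hxy : y ≤ x)
    (hz : z ≤ 0) : ENNReal.ofReal (x ^ z) ≤ ENNReal.ofReal y ^ z := by
  rw [← ENNReal.ofReal_rpow_of_pos hx]
  exact ENNReal.rpow_le_rpow_of_nonpos (ENNReal.ofReal_le_ofReal hxy) hz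

theorem lintegral_le_of_ae_tendsto {α ι : Type*} [MeasurableSpace α] {μ : Measure α}
    {l : Filter ι} [l.NeBot] [l.IsCountablyGenerated] {F : ι → α → ℝ≥0∞} {f : α → ℝ≥0∞}
    {L : ℝ≥0∞} (hF : ∀ i, AEMeasurable (F i) μ)
    (hFf : ∀ᵐ a ∂μ, Tendsto (fun i => F i a) l (𝓝 (f a)))
    (hL : Tendsto (fun i => ∫⁻ a, F i a ∂μ) l (𝓝 L)) : ∫⁻ a, f a ∂μ ≤ L :=
  calc ∫⁻ a, f a ∂μ = ∫⁻ a, liminf (fun i => F i a) l ∂μ :=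
        lintegral_congr_ae (hFf.mono fun _ h => h.liminf_eq.symm)
    _ ≤ liminf (fun i => ∫⁻ a, F i a ∂μ) l := lintegral_liminf_le' hF
    _ = L := hL.liminf_eq

section PowerLowerBound

variable {E : Type*} [NormedAddCommGroup E] [MeasurableSpace E] {μ : Measure E}
  {f g : E → ℝ≥0∞} {a b : ℝ}

def HasPowerLowerBound (μ : Measure E) (f : E → ℝ≥0∞) (a : ℝ) : Prop :=
  ∃ c R : ℝ, 0 < c ∧ ∀ᵐ z ∂μ, R ≤ ‖z‖ → ENNReal.ofReal (c * ‖z‖ ^ (-a)) ≤ f z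

namespace HasPowerLowerBound

theorem of_forall {c R : ℝ} (hc : 0 < c)
    (h : ∀ z, R ≤ ‖z‖ → ENNReal.ofReal (c * ‖z‖ ^ (-a)) ≤ f z) : HasPowerLowerBound μ f a :=
  ⟨c, R, hc, .of_forall h⟩

theorem mono (hf : HasPowerLowerBound μ f a) (hfg : f ≤ᵐ[μ] g) : HasPowerLowerBound μ g a := by
  obtain ⟨c, R, hc, h⟩ := hf
  refine ⟨c, R, hc, ?_⟩
  filter_upwards [h, hfg] with z hz hfgz hRz using (hz hRz).trans hfgz

theorem mono_exponent (hf : HasPowerLowerBound μ f a) (hab : a ≤ b) :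
    HasPowerLowerBound μ f b := by
  obtain ⟨c, R, hc, h⟩ := hf
  refine ⟨c, max R 1, hc, ?_⟩
  filter_upwards [h] with z hz hRz
  refine le_trans (ENNReal.ofReal_le_ofReal ?_) (hz (le_of_max_le_left hRz))
  gcongr
  exact le_of_max_le_right hRz

theorem const_mul (hf : HasPowerLowerBound μ f a) {c₀ : ℝ} (hc₀ : 0 < c₀) :
    HasPowerLowerBound μ (fun z => ENNReal.ofReal c₀ * f z) a := by
  obtain ⟨c, R, hc, h⟩ := hf
  refine ⟨c₀ * c, R, by positivity, ?_⟩
  filter_upwards [h] with z hz hRz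
  rw [mul_assoc, ENNReal.ofReal_mul hc₀.le]
  exact mul_le_mul_right (hz hRz) _

theorem rpow (hf : HasPowerLowerBound μ f a) {p : ℝ} (hp : 0 ≤ p) :
    HasPowerLowerBound μ (fun z => f z ^ p) (p * a) := by
  obtain ⟨c, R, hc, h⟩ := hf
  refine ⟨c ^ p, R, by positivity, ?_⟩
  filter_upwards [h] with z hz hRz
  have hpow : c ^ p * ‖z‖ ^ (-(p * a)) = (c * ‖z‖ ^ (-a)) ^ p := by
    rw [Real.mul_rpow hc.le (by positivity), ← Real.rpow_mul (norm_nonneg z)]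
    ring_nf
  rw [hpow, ← ENNReal.ofReal_rpow_of_nonneg (by positivity) hp]
  exact ENNReal.rpow_le_rpow (hz hRz) hp

theorem mul (hf : HasPowerLowerBound μ f a) (hg : HasPowerLowerBound μ g b) :
    HasPowerLowerBound μ (fun z => f z * g z) (a + b) := by
  obtain ⟨c, R, hc, hf⟩ := hf
  obtain ⟨c', R', hc', hg⟩ := hg
  refine ⟨c * c', max (max R R') 1, by positivity, ?_⟩
  filter_upwards [hf, hg] with z hfz hgz hRz
  simp only [max_le_iff] at hRz
  have hz : 0 < ‖z‖ := by linarith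
  have hprod : c * c' * ‖z‖ ^ (-(a + b)) = (c * ‖z‖ ^ (-a)) * (c' * ‖z‖ ^ (-b)) := by
    rw [neg_add, Real.rpow_add hz]
    ring
  rw [hprod, ENNReal.ofReal_mul (by positivity)]
  exact mul_le_mul' (hfz hRz.1.1) (hgz hRz.1.2)

theorem of_norm_eq {F : Type*} [NormedAddCommGroup F] {φ : E → F} (hφ : ∀ y, ‖φ y‖ = ‖y‖)
    (x₀ : F) {s : ℝ} (hs : 0 ≤ s) :
    HasPowerLowerBound μ (fun y => ENNReal.ofReal ‖x₀ - φ y‖ ^ (-s)) s := by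
  refine .of_forall (c := 2 ^ (-s)) (R := max ‖x₀‖ 1) (by positivity) fun y hy => ?_
  have hy0 : 0 < ‖y‖ := lt_of_lt_of_le one_pos (le_of_max_le_right hy)
  rw [← Real.mul_rpow zero_le_two hy0.le]
  refine ENNReal.ofReal_rpow_le_ofReal_rpow_of_nonpos (by positivity) ?_ (neg_nonpos.2 hs)
  linarith [norm_sub_le x₀ (φ y), hφ y, le_of_max_le_left hy]

end HasPowerLowerBound

end PowerLowerBound

section RieszPotential

open Metric Set

variable {E : Type*} [NormedAddCommGroup E] [MeasurableSpace E] {μ : Measure E}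
  {f : E → ℝ≥0∞} {s : ℝ}

def rieszPotential (μ : Measure E) (s : ℝ) (f : E → ℝ≥0∞) (y : E) : ℝ≥0∞ :=
  ∫⁻ z, f z * ENNReal.ofReal ‖y - z‖ ^ (-s) ∂μ

theorem Measurable.rieszPotential [SecondCountableTopology E] [BorelSpace E] [SFinite μ]
    (hf : Measurable f) : Measurable (rieszPotential μ s f) :=
  ((hf.comp measurable_snd).mul
    ((measurable_fst.sub measurable_snd).norm.ennreal_ofReal.pow_const _)).lintegral_prod_right'

theorem hasPowerLowerBound_rieszPotential_of_lintegral_ne_zero [OpensMeasurableSpace E]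
    (hf : ∫⁻ z, f z ∂μ ≠ 0) (hs : 0 ≤ s) :
    HasPowerLowerBound μ (rieszPotential μ s f) s := by
  obtain ⟨n, hn⟩ : ∃ n : ℕ, ∫⁻ z in closedBall 0 n, f z ∂μ ≠ 0 := by
    by_contra! h
    refine hf (nonpos_iff_eq_zero.1 ?_)
    calc ∫⁻ z, f z ∂μ = ∫⁻ z in ⋃ n : ℕ, closedBall 0 n, f z ∂μ := by
          rw [iUnion_closedBall_nat, Measure.restrict_univ]
      _ ≤ ∑' n : ℕ, ∫⁻ z in closedBall 0 n, f z ∂μ := lintegral_iUnion_le _ _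
      _ = 0 := by simp [h]
  obtain ⟨c, -, hc, hcf⟩ := ENNReal.lt_iff_exists_real_btwn.1 (pos_iff_ne_zero.2 hn)
  replace hc : 0 < c := ENNReal.ofReal_pos.1 hc
  refine .of_forall (c := c * 2 ^ (-s)) (R := max n 1) (by positivity) fun y hy => ?_
  have hy0 : 0 < ‖y‖ := lt_of_lt_of_le one_pos (le_of_max_le_right hy)
  have hkernel : ∀ z ∈ closedBall (0 : E) n,
      f z * ENNReal.ofReal ((2 * ‖y‖) ^ (-s)) ≤ f z * ENNReal.ofReal ‖y - z‖ ^ (-s) := by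
    intro z hz
    gcongr
    refine ENNReal.ofReal_rpow_le_ofReal_rpow_of_nonpos (by positivity) ?_ (neg_nonpos.2 hs)
    have hz' : ‖z‖ ≤ n := by simpa using hz
    linarith [norm_sub_le y z, le_of_max_le_left hy]
  calc ENNReal.ofReal (c * 2 ^ (-s) * ‖y‖ ^ (-s))
      = ENNReal.ofReal c * ENNReal.ofReal ((2 * ‖y‖) ^ (-s)) := by
        rw [Real.mul_rpow zero_le_two hy0.le, mul_assoc, ENNReal.ofReal_mul hc.le]
    _ ≤ (∫⁻ z in closedBall 0 n, f z ∂μ) * ENNReal.ofReal ((2 * ‖y‖) ^ (-s)) := by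
        gcongr
    _ = ∫⁻ z in closedBall 0 n, f z * ENNReal.ofReal ((2 * ‖y‖) ^ (-s)) ∂μ :=
        (lintegral_mul_const' _ _ ENNReal.ofReal_ne_top).symm
    _ ≤ ∫⁻ z in closedBall 0 n, f z * ENNReal.ofReal ‖y - z‖ ^ (-s) ∂μ :=
        setLIntegral_mono' measurableSet_closedBall hkernel
    _ ≤ rieszPotential μ s f y := setLIntegral_le_lintegral _ _

end RieszPotential

section HaarMeasure

open Metric Module Set Function

variable {E : Type*} [NormedAddCommGroup E] [NormedSpace ℝ E] [FiniteDimensional ℝ E]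
  [MeasurableSpace E] [BorelSpace E] [Nontrivial E] {μ : Measure E} [μ.IsAddHaarMeasure]
  {f : E → ℝ≥0∞} {a : ℝ}

variable (μ) in
theorem exists_pos_ofReal_le_setLIntegral_annulus {s : ℝ} (hs : 0 ≤ s) :
    ∃ C : ℝ, 0 < C ∧ ∀ (x : E) (r : ℝ), 0 < r →
      ENNReal.ofReal (C * r ^ ((finrank ℝ E : ℝ) - s)) ≤
        ∫⁻ y in ball x r \ ball x (r / 2), ENNReal.ofReal ‖x - y‖ ^ (-s) ∂μ := by
  set d := finrank ℝ E
  have hd : 0 < d := finrank_pos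
  have hhalf : (2⁻¹ : ℝ) ^ d < 1 := pow_lt_one₀ (by norm_num) (by norm_num) hd.ne'
  refine ⟨(1 - 2⁻¹ ^ d) * μ.real (ball 0 1),
    mul_pos (by linarith)
      (ENNReal.toReal_pos (measure_ball_pos μ 0 one_pos).ne' measure_ball_lt_top.ne),
    fun x r hr => ?_⟩
  have hvol : μ (ball x r \ ball x (r / 2)) =
      ENNReal.ofReal (r ^ d * (1 - 2⁻¹ ^ d) * μ.real (ball 0 1)) := by
    rw [measure_sdiff (ball_subset_ball (by linarith)) measurableSet_ball.nullMeasurableSet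
        measure_ball_lt_top.ne, Measure.addHaar_ball μ x hr.le,
      Measure.addHaar_ball μ x (by positivity),
      ← ENNReal.sub_mul (fun _ _ => measure_ball_lt_top.ne),
      ← ENNReal.ofReal_sub _ (by positivity), ← ofReal_measureReal measure_ball_lt_top.ne,
      ← ENNReal.ofReal_mul (by nlinarith [pow_le_pow_left₀ (by positivity) (half_le_self hr.le) d])]
    congr 1
    ring
  have hkernel : ∀ y ∈ ball x r \ ball x (r / 2),
      ENNReal.ofReal (r ^ (-s)) ≤ ENNReal.ofReal ‖x - y‖ ^ (-s) := fun y hy =>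
    ENNReal.ofReal_rpow_le_ofReal_rpow_of_nonpos hr
      (by rw [← dist_eq_norm, dist_comm]; exact hy.1.le) (neg_nonpos.2 hs)
  calc ENNReal.ofReal ((1 - 2⁻¹ ^ d) * μ.real (ball 0 1) * r ^ ((d : ℝ) - s))
      = ENNReal.ofReal (r ^ (-s)) * μ (ball x r \ ball x (r / 2)) := by
        rw [hvol, ← ENNReal.ofReal_mul (by positivity), Real.rpow_sub hr, Real.rpow_natCast,
          Real.rpow_neg hr.le]
        congr 1
        ring
    _ = ∫⁻ _ in ball x r \ ball x (r / 2), ENNReal.ofReal (r ^ (-s)) ∂μ :=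
        (setLIntegral_const _ _).symm
    _ ≤ _ := setLIntegral_mono (by fun_prop) hkernel

variable (μ) in
theorem setLIntegral_rpow_neg_finrank_norm_eq_top {M : ℝ} (hM : 0 < M) :
    ∫⁻ y in {y : E | M ≤ ‖y‖}, ENNReal.ofReal ‖y‖ ^ (-(finrank ℝ E : ℝ)) ∂μ = ⊤ := by
  obtain ⟨C, hC, hannulus⟩ := exists_pos_ofReal_le_setLIntegral_annulus μ (E := E)
    (s := finrank ℝ E) (by positivity)
  set A : ℕ → Set E := fun n => ball 0 (2 ^ (n + 1) * M) \ ball 0 (2 ^ (n + 1) * M / 2)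
  have hA : ∀ n, A n = norm ⁻¹' Ico (2 ^ n * M) (2 ^ (n + 1) * M) := fun n => by
    have : (2 : ℝ) ^ (n + 1) * M / 2 = 2 ^ n * M := by ring
    ext y
    simp [A, this, and_comm]
  have hAdisj : Pairwise (Disjoint on A) := by
    have := ((pow_right_mono₀ (one_le_two (α := ℝ))).mul_const hM.le).pairwise_disjoint_on_Ico_succ
    intro m n hmn
    rw [onFun, hA, hA]
    exact (this hmn).preimage _
  have hAsub : ⋃ n, A n ⊆ {y | M ≤ ‖y‖} := by
    simp only [hA, Set.iUnion_subset_iff]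
    intro n y hy
    exact (le_mul_of_one_le_left hM.le (one_le_pow₀ one_le_two)).trans hy.1
  refine top_le_iff.1 ?_
  calc ⊤ = ∑' _ : ℕ, ENNReal.ofReal C :=
        (ENNReal.tsum_const_eq_top_of_ne_zero (ENNReal.ofReal_pos.2 hC).ne').symm
    _ ≤ ∑' n, ∫⁻ y in A n, ENNReal.ofReal ‖y‖ ^ (-(finrank ℝ E : ℝ)) ∂μ :=
        ENNReal.tsum_le_tsum fun n => by
          simpa using hannulus 0 (2 ^ (n + 1) * M) (by positivity)
    _ = ∫⁻ y in ⋃ n, A n, ENNReal.ofReal ‖y‖ ^ (-(finrank ℝ E : ℝ)) ∂μ :=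
        (lintegral_iUnion (fun n => measurableSet_ball.diff measurableSet_ball) hAdisj _).symm
    _ ≤ _ := lintegral_mono_set hAsub

theorem HasPowerLowerBound.lintegral_eq_top (hf : HasPowerLowerBound μ f a)
    (ha : a ≤ finrank ℝ E) : ∫⁻ z, f z ∂μ = ⊤ := by
  obtain ⟨c, R, hc, h⟩ := hf.mono_exponent ha
  set S := {z : E | max R 1 ≤ ‖z‖}
  have hS : MeasurableSet S := measurableSet_le measurable_const measurable_norm
  have hbound : ∀ᵐ z ∂μ, z ∈ S →
      ENNReal.ofReal c * ENNReal.ofReal ‖z‖ ^ (-(finrank ℝ E : ℝ)) ≤ f z := by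
    filter_upwards [h] with z hz hzS
    have hz0 : 0 < ‖z‖ := lt_of_lt_of_le one_pos (le_of_max_le_right hzS)
    rw [ENNReal.ofReal_rpow_of_pos hz0, ← ENNReal.ofReal_mul hc.le]
    exact hz (le_of_max_le_left hzS)
  refine top_le_iff.1 ?_
  calc ⊤ = ENNReal.ofReal c * ∫⁻ z in S, ENNReal.ofReal ‖z‖ ^ (-(finrank ℝ E : ℝ)) ∂μ := by
        rw [setLIntegral_rpow_neg_finrank_norm_eq_top μ (by positivity),
          ENNReal.mul_top (ENNReal.ofReal_pos.2 hc).ne']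
    _ = ∫⁻ z in S, ENNReal.ofReal c * ENNReal.ofReal ‖z‖ ^ (-(finrank ℝ E : ℝ)) ∂μ :=
        (lintegral_const_mul' _ _ ENNReal.ofReal_ne_top).symm
    _ ≤ ∫⁻ z in S, f z ∂μ := setLIntegral_mono_ae' hS hbound
    _ ≤ ∫⁻ z, f z ∂μ := setLIntegral_le_lintegral _ _

theorem HasPowerLowerBound.rieszPotential (hf : HasPowerLowerBound μ f a) (ha : 0 ≤ a)
    {s : ℝ} (hs : 0 ≤ s) :
    HasPowerLowerBound μ (rieszPotential μ s f) (a + s - finrank ℝ E) := by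
  obtain ⟨c, R, hc, hfR⟩ := hf
  obtain ⟨C, hC, hannulus⟩ := exists_pos_ofReal_le_setLIntegral_annulus μ hs
  set d : ℝ := (finrank ℝ E : ℝ)
  refine .of_forall (c := c * (3 / 2) ^ (-a) * (C * 2⁻¹ ^ (d - s))) (R := max (2 * R) 1)
    (by positivity) fun y hy => ?_
  have hy0 : 0 < ‖y‖ := lt_of_lt_of_le one_pos (le_of_max_le_right hy)
  set r := 2⁻¹ * ‖y‖ with hr
  have hr0 : 0 < r := mul_pos (by norm_num) hy0
  have hnear : ∀ᵐ z ∂μ, z ∈ ball y r →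
      ENNReal.ofReal (c * ((3 / 2) * ‖y‖) ^ (-a)) * ENNReal.ofReal ‖y - z‖ ^ (-s) ≤
        f z * ENNReal.ofReal ‖y - z‖ ^ (-s) := by
    filter_upwards [hfR] with z hz hzy
    rw [mem_ball, dist_eq_norm] at hzy
    have hlow : r ≤ ‖z‖ := by linarith [norm_sub_norm_le y z, norm_sub_rev y z, hr]
    have hup : ‖z‖ ≤ (3 / 2) * ‖y‖ := by linarith [norm_le_norm_add_norm_sub' z y, hr]
    gcongr
    refine le_trans (ENNReal.ofReal_le_ofReal ?_) (hz (by linarith [le_of_max_le_left hy, hr]))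
    exact mul_le_mul_of_nonneg_left
      (Real.rpow_le_rpow_of_nonpos (hr0.trans_le hlow) hup (neg_nonpos.2 ha)) hc.le
  calc ENNReal.ofReal (c * (3 / 2) ^ (-a) * (C * 2⁻¹ ^ (d - s)) * ‖y‖ ^ (-(a + s - d)))
      = ENNReal.ofReal (c * ((3 / 2) * ‖y‖) ^ (-a)) * ENNReal.ofReal (C * r ^ (d - s)) := by
        rw [← ENNReal.ofReal_mul (by positivity), Real.mul_rpow (by norm_num) hy0.le,
          Real.mul_rpow (by norm_num) hy0.le, show -(a + s - d) = -a + (d - s) by ring,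
          Real.rpow_add hy0]
        congr 1
        ring
    _ ≤ ENNReal.ofReal (c * ((3 / 2) * ‖y‖) ^ (-a)) *
          ∫⁻ z in ball y r, ENNReal.ofReal ‖y - z‖ ^ (-s) ∂μ := by
        gcongr
        exact (hannulus y r hr0).trans (lintegral_mono_set sdiff_subset)
    _ = ∫⁻ z in ball y r,
          ENNReal.ofReal (c * ((3 / 2) * ‖y‖) ^ (-a)) * ENNReal.ofReal ‖y - z‖ ^ (-s) ∂μ :=
        (lintegral_const_mul' _ _ ENNReal.ofReal_ne_top).symm
    _ ≤ ∫⁻ z in ball y r, f z * ENNReal.ofReal ‖y - z‖ ^ (-s) ∂μ :=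
        setLIntegral_mono_ae' measurableSet_ball hnear
    _ ≤ _ := setLIntegral_le_lintegral _ _

end HaarMeasure

section HalfSpace

variable {N : ℕ}

theorem up_apply (w : EuclideanSpace ℝ (Fin (N - 1))) (t : ℝ) (i : Fin N) :
    up N w t i = if h : (i : ℕ) < N - 1 then w ⟨i, h⟩ else t := rfl

theorem up_sub_up (w v : EuclideanSpace ℝ (Fin (N - 1))) (t r : ℝ) :
    up N w t - up N v r = up N (w - v) (t - r) := by
  ext i
  simp only [PiLp.sub_apply, up_apply]
  split <;> simp

theorem continuous_up :
    Continuous fun q : EuclideanSpace ℝ (Fin (N - 1)) × ℝ => up N q.1 q.2 := by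
  refine (PiLp.continuous_toLp 2 _).comp (continuous_pi fun i => ?_)
  by_cases h : (i : ℕ) < N - 1
  · simp only [dif_pos h]
    fun_prop
  · simpa only [dif_neg h] using continuous_snd

theorem continuous_up_zero : Continuous fun w : EuclideanSpace ℝ (Fin (N - 1)) => up N w 0 :=
  continuous_up.comp (continuous_id.prodMk continuous_const)

theorem ht_up (hN : 1 ≤ N) (w : EuclideanSpace ℝ (Fin (N - 1))) (t : ℝ) : ht N (up N w t) = t := by
  simp [ht, up_apply, show N - 1 < N by omega]

theorem norm_up_zero (hN : 1 ≤ N) (w : EuclideanSpace ℝ (Fin (N - 1))) : ‖up N w 0‖ = ‖w‖ := by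
  rw [EuclideanSpace.norm_eq, EuclideanSpace.norm_eq]
  congr 1
  let g : ℕ → ℝ := fun n => if h : n < N - 1 then ‖w ⟨n, h⟩‖ ^ 2 else 0
  have hup : ∑ i : Fin N, ‖up N w 0 i‖ ^ 2 = ∑ n ∈ Finset.range N, g n := by
    rw [← Fin.sum_univ_eq_sum_range g N]
    refine Finset.sum_congr rfl fun i _ => ?_
    simp only [up_apply, g]
    split <;> simp
  have hw : ∑ j : Fin (N - 1), ‖w j‖ ^ 2 = ∑ n ∈ Finset.range (N - 1), g n := by
    rw [← Fin.sum_univ_eq_sum_range g (N - 1)]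
    exact Finset.sum_congr rfl fun j _ => by simp [g, j.isLt]
  rw [hup, hw, show Finset.range N = Finset.range (N - 1 + 1) by rw [Nat.sub_add_cancel hN],
    Finset.sum_range_succ]
  simp [g]

theorem isOpen_upperHalf : IsOpen (upperHalf N) := by
  refine isOpen_lt continuous_const ?_
  unfold ht
  split
  · fun_prop
  · exact continuous_const

theorem volume_upperHalf_ne_zero (hN : 1 ≤ N) : volume (upperHalf N) ≠ 0 :=
  (isOpen_upperHalf.measure_pos volume ⟨up N 0 1, by simp [upperHalf, ht_up hN]⟩).ne'

theorem up_zero_mem_closure_upperHalf (hN : 1 ≤ N) (x' : EuclideanSpace ℝ (Fin (N - 1))) :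
    up N x' 0 ∈ closure (upperHalf N) :=
  mem_closure_of_tendsto
    (((continuous_up.comp (continuous_const.prodMk continuous_id)).tendsto 0).mono_left
      nhdsWithin_le_nhds)
    (eventually_nhdsWithin_of_forall fun t (ht : t ∈ Set.Ioi 0) => by simpa [upperHalf, ht_up hN])

theorem neBot_nhdsWithin_upperHalf_inter_of_dense (hN : 1 ≤ N)
    {G : Set (EuclideanSpace ℝ (Fin N))} (hG : Dense G) (x' : EuclideanSpace ℝ (Fin (N - 1))) :
    (𝓝[upperHalf N ∩ G] up N x' 0).NeBot :=
  mem_closure_iff_nhdsWithin_neBot.1 <|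
    closure_minimal (hG.open_subset_closure_inter isOpen_upperHalf) isClosed_closure
      (up_zero_mem_closure_upperHalf hN x')

end HalfSpace

section Solution

open Module Set

variable {N : ℕ} {p lam k : ℝ} {u : EuclideanSpace ℝ (Fin N) → ℝ}

def boundaryTrace (N : ℕ) (u : EuclideanSpace ℝ (Fin N) → ℝ)
    (x' : EuclideanSpace ℝ (Fin (N - 1))) : ℝ≥0∞ :=
  ENNReal.ofReal (u (up N x' 0))

theorem Hu_eq_rieszPotential :
    Hu N p k u = rieszPotential volume k (fun x' => boundaryTrace N u x' ^ p) := rfl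

theorem Measurable.boundaryTrace (hu : Measurable u) : Measurable (boundaryTrace N u) :=
  (hu.comp continuous_up_zero.measurable).ennreal_ofReal

theorem Measurable.Hu (hu : Measurable u) : Measurable (Hu N p k u) :=
  (hu.boundaryTrace.pow_const p).rieszPotential

theorem nontrivial_boundary (hN : 2 ≤ N) : Nontrivial (EuclideanSpace ℝ (Fin (N - 1))) :=
  Module.nontrivial_of_finrank_pos (R := ℝ) (by rw [finrank_euclideanSpace_fin]; omega)

theorem finrank_boundary (hN : 1 ≤ N) :
    (finrank ℝ (EuclideanSpace ℝ (Fin (N - 1))) : ℝ) = N - 1 := by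
  rw [finrank_euclideanSpace_fin, Nat.cast_sub hN, Nat.cast_one]

theorem IsPosSolution0.lintegral_boundaryTrace_rpow_ne_zero (hN : 1 ≤ N)
    (hu : IsPosSolution0 N p lam k u) : ∫⁻ x', boundaryTrace N u x' ^ p ≠ 0 := by
  obtain ⟨humeas, hpos, -, -, -, hrep⟩ := hu
  intro h0
  have htrace : (fun x' => boundaryTrace N u x' ^ p) =ᵐ[volume] 0 :=
    (lintegral_eq_zero_iff (humeas.boundaryTrace.pow_const p)).1 h0
  have hHu : Hu N p k u = 0 := funext fun y' =>
    (lintegral_congr_ae (htrace.mono fun z' (hz' : boundaryTrace N u z' ^ p = 0) => by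
      simp only [boundaryTrace] at hz'
      rw [hz', zero_mul])).trans lintegral_zero
  have hfalse : ∀ᵐ x ∂volume.restrict (upperHalf N), False := by
    filter_upwards [hpos, hrep] with x hx hx'
    simp [hHu] at hx'
    linarith
  have := ae_restrict_neBot.2 (volume_upperHalf_ne_zero hN)
  exact hfalse.exists.elim fun _ h => h

theorem IsPosSolution0.rieszPotential_Hu_le_boundaryTrace (hN : 1 ≤ N)
    (hu : IsPosSolution0 N p lam k u) :
    ∀ᵐ x', ENNReal.ofReal (2 * lam / (((N : ℝ) - 2) * sphereArea N)) *
      rieszPotential volume (N - 2) (Hu N p k u) x' ≤ boundaryTrace N u x' := by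
  obtain ⟨humeas, -, htrace, hHu, -, hrep⟩ := hu
  set c := ENNReal.ofReal (2 * lam / (((N : ℝ) - 2) * sphereArea N))
  set K : EuclideanSpace ℝ (Fin N) → EuclideanSpace ℝ (Fin (N - 1)) → ℝ≥0∞ :=
    fun x y' => ENNReal.ofReal ‖x - up N y' 0‖ ^ ((2 : ℝ) - N)
  set G := {x | x ∈ upperHalf N → ENNReal.ofReal (u x) = c * ∫⁻ y', K x y' * Hu N p k u y'}
  have hG : Dense G :=
    Measure.dense_of_ae ((ae_restrict_iff' isOpen_upperHalf.measurableSet).1 hrep)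
  filter_upwards [htrace] with x' hx'
  set x₀ := up N x' 0
  have := neBot_nhdsWithin_upperHalf_inter_of_dense hN hG x'
  have hK : ∀ y', Continuous fun x => K x y' := fun y' =>
    ENNReal.continuous_rpow_const.comp
      (ENNReal.continuous_ofReal.comp (continuous_id.sub continuous_const).norm)
  have hK' : ∀ x, Measurable (K x) := fun x =>
    ENNReal.continuous_rpow_const.measurable.comp
      (continuous_const.sub continuous_up_zero).norm.measurable.ennreal_ofReal
  have hfatou := lintegral_le_of_ae_tendsto (l := 𝓝[upperHalf N ∩ G] x₀)
    (F := fun x y' => c * (K x y' * Hu N p k u y')) (L := ENNReal.ofReal (u x₀))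
    (f := fun y' => c * (K x₀ y' * Hu N p k u y'))
    (fun x => (((hK' x).mul humeas.Hu).const_mul c).aemeasurable)
    (by
      filter_upwards [hHu] with y' hy'
      exact ENNReal.Tendsto.const_mul (ENNReal.Tendsto.mul_const
        ((hK y').tendsto x₀ |>.mono_left nhdsWithin_le_nhds) (.inr hy'.ne))
        (.inr ENNReal.ofReal_ne_top))
    (by
      refine (ENNReal.tendsto_ofReal
        (hx'.mono_left (nhdsWithin_mono _ inter_subset_left))).congr' ?_
      filter_upwards [self_mem_nhdsWithin] with x hx
      rw [lintegral_const_mul' _ _ ENNReal.ofReal_ne_top, hx.2 hx.1])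
  have hK₀ : ∀ y', K x₀ y' * Hu N p k u y' =
      Hu N p k u y' * ENNReal.ofReal ‖x' - y'‖ ^ (-((N : ℝ) - 2)) := fun y' => by
    simp only [K, x₀, up_sub_up, sub_zero, norm_up_zero hN, neg_sub, mul_comm]
  rw [lintegral_const_mul' _ _ ENNReal.ofReal_ne_top] at hfatou
  simpa only [hK₀, rieszPotential, boundaryTrace] using hfatou

theorem sphereArea_pos (hN : 1 ≤ N) : 0 < sphereArea N :=
  mul_pos (Nat.cast_pos.2 hN)
    (ENNReal.toReal_pos (Metric.measure_ball_pos _ _ one_pos).ne' measure_ball_lt_top.ne)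

theorem IsPosSolution0.hasPowerLowerBound_Hu (hN : 1 ≤ N) (hk : 0 ≤ k)
    (hu : IsPosSolution0 N p lam k u) : HasPowerLowerBound volume (Hu N p k u) k :=
  hasPowerLowerBound_rieszPotential_of_lintegral_ne_zero
    (hu.lintegral_boundaryTrace_rpow_ne_zero hN) hk

theorem IsPosSolution0.not_hasPowerLowerBound_Hu (hN : 3 ≤ N) (hu : IsPosSolution0 N p lam k u)
    {b : ℝ} (hb : b ≤ 1) : ¬ HasPowerLowerBound volume (Hu N p k u) b := by
  intro hHu
  obtain ⟨-, -, -, -, hfin, -⟩ := hu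
  have := nontrivial_boundary (by omega : 2 ≤ N)
  have := ae_restrict_neBot.2 (volume_upperHalf_ne_zero (by omega : 1 ≤ N))
  obtain ⟨x₀, hx₀⟩ := hfin.exists
  have hN' : (3 : ℝ) ≤ N := by exact_mod_cast hN
  have hkernel := HasPowerLowerBound.of_norm_eq (μ := volume) (norm_up_zero (by omega : 1 ≤ N))
    x₀ (s := (N : ℝ) - 2) (by linarith)
  simp only [neg_sub] at hkernel
  refine hx₀.ne ((hHu.mul hkernel).lintegral_eq_top ?_)
  rw [finrank_boundary (by omega)]
  linarith

theorem IsPosSolution0.hasPowerLowerBound_Hu_step (hN : 3 ≤ N) (hlam : 0 < lam) (hp : 0 ≤ p)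
    (hk : 0 ≤ k) (hu : IsPosSolution0 N p lam k u) {b : ℝ} (hb : 1 ≤ b)
    (hHu : HasPowerLowerBound volume (Hu N p k u) b) :
    HasPowerLowerBound volume (Hu N p k u) (p * (b - 1) + k - (N - 1)) := by
  have := nontrivial_boundary (by omega : 2 ≤ N)
  have hN' : (3 : ℝ) ≤ N := by exact_mod_cast hN
  have hc : 0 < 2 * lam / (((N : ℝ) - 2) * sphereArea N) :=
    div_pos (by linarith) (mul_pos (by linarith) (sphereArea_pos (by omega)))
  have htrace : HasPowerLowerBound volume (boundaryTrace N u) (b - 1) := by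
    have h := (hHu.rieszPotential (by linarith) (s := (N : ℝ) - 2) (by linarith)).const_mul hc
    rw [finrank_boundary (by omega)] at h
    convert h.mono (hu.rieszPotential_Hu_le_boundaryTrace (by omega)) using 1
    ring
  have h := (htrace.rpow hp).rieszPotential (mul_nonneg hp (by linarith)) hk
  rwa [finrank_boundary (by omega), ← Hu_eq_rieszPotential] at h

end Solution

theorem exists_nonpos_of_affine_step {P : ℝ → Prop} {p C a : ℝ} (hC : 0 < C)
    (ha : p * a - C < a) (h₀ : P a) (hstep : ∀ x, 0 < x → P x → P (p * x - C)) :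
    ∃ x ≤ 0, P x := by
  by_contra! hpos
  set ε := min C (a - (p * a - C))
  have hε : 0 < ε := lt_min hC (by linarith)
  have hdec : ∀ x, 0 ≤ x → x ≤ a → p * x - C ≤ x - ε := fun x hx hxa => by
    rcases le_or_gt p 1 with hp1 | hp1
    · nlinarith [min_le_left C (a - (p * a - C))]
    · nlinarith [min_le_right C (a - (p * a - C))]
  have hreach : ∀ n : ℕ, ∃ x, P x ∧ x ≤ a - n * ε := by
    intro n
    induction n with
    | zero => exact ⟨a, h₀, by simp⟩
    | succ n ih =>
      obtain ⟨x, hx, hxa⟩ := ih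
      have hx0 : 0 < x := not_le.1 fun h => hpos x h hx
      have hnε : 0 ≤ (n : ℝ) * ε := by positivity
      refine ⟨p * x - C, hstep x hx0 hx, ?_⟩
      push_cast
      linarith [hdec x hx0.le (by linarith)]
  obtain ⟨n, hn⟩ := exists_nat_gt (a / ε)
  obtain ⟨x, hx, hxa⟩ := hreach n
  exact hpos x (by rw [div_lt_iff₀ hε] at hn; linarith) hx

/-- Theorem 1.2(i), nonexistence for `μ ≡ 0`: if `0 < k ≤ 1` and `p > 0`, or if
`1 < k < N-1` and `0 < p < (N-1)/(k-1)`, then for every `λ > 0` problem (1.1) with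
`μ ≡ 0` has no positive solution. -/
theorem no_solution_mu_zero
    (N : ℕ) (hN : 3 ≤ N) (k p lam : ℝ) (hlam : 0 < lam)
    (hcase : (0 < k ∧ k ≤ 1 ∧ 0 < p) ∨
      (1 < k ∧ k < (N : ℝ) - 1 ∧ 0 < p ∧ p < ((N : ℝ) - 1) / (k - 1))) :
    ¬ ∃ u : EuclideanSpace ℝ (Fin N) → ℝ, IsPosSolution0 N p lam k u := by
  rintro ⟨u, hu⟩
  rcases hcase with ⟨hk, hk1, -⟩ | ⟨hk1, hkN, hp, hpk⟩
  · exact hu.not_hasPowerLowerBound_Hu hN hk1 (hu.hasPowerLowerBound_Hu (by omega) hk.le)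
  · have hpk' : p * (k - 1) < N - 1 := by rwa [lt_div_iff₀ (by linarith)] at hpk
    obtain ⟨t, ht, hHu⟩ := exists_nonpos_of_affine_step
      (P := fun t => HasPowerLowerBound volume (Hu N p k u) (t + 1))
      (p := p) (C := N - k) (a := k - 1)
      (by linarith) (by linarith)
      (by simpa using hu.hasPowerLowerBound_Hu (by omega) (by linarith))
      fun t ht hHu => by
        convert hu.hasPowerLowerBound_Hu_step hN hlam hp.le (by linarith) (by linarith) hHu
          using 1
        ring
    exact hu.not_hasPowerLowerBound_Hu hN (by linarith) hHu

end
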